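/- For z = z(0,e,k) ∈ 𝔽 (a positive finite floating-point representable number) the endpoints of the rounding interval are given explicitly by: ⌊z⌋ = 2^{e−1} if e = e_min and k = 0; ⌊z⌋ = 2^{e−1}·(1 + (2^{p+1}−1)/2^{p+1}) if e > e_min and k = 0; ⌊z⌋ = 2^e·(1 + (2k−1)/2^{p+1}) otherwise; and ⌈z⌉ = z if e = e_max and k = 2^p−1; ⌈z⌉ = 2^e·(1 + (2k+1)/2^{p+1}) otherwise. For z = z(1,e,k) the identities ⌊−z⌋ = −⌈z⌉ and ⌈−z⌉ = −⌊z⌋ hold (where −z here denotes the corresponding positive representable number). -/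
import Mathlib


open MeasureTheory

noncomputable section

/-- The finite floating-point representable number `(−1)^s · 2^e · (1 + k·2^{−p})`. -/
def zfp (p : ℕ) (s : ℕ) (e : ℤ) (k : ℕ) : ℝ :=
  (-1 : ℝ) ^ s * (2 : ℝ) ^ e * (1 + (k : ℝ) / 2 ^ p)

/-- The set of finite floating-point representable numbers. -/
def Ffin (p : ℕ) (emin emax : ℤ) : Set ℝ :=
  {x | ∃ s : ℕ, s ≤ 1 ∧ ∃ e : ℤ, emin ≤ e ∧ e ≤ emax ∧ ∃ k : ℕ, k < 2 ^ p ∧ x = zfp p s e k}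

/-- `Round : ℝ → 𝔽 ⊆ EReal` is a round-to-nearest map: points below (resp. above) all
finite representable numbers go to `−∞` (resp. `∞`); points lying between the least and
greatest finite representable numbers go to a nearest element of `𝔽 ∪ {0}`
(ties broken arbitrarily). -/
def IsRoundNearest (p : ℕ) (emin emax : ℤ) (Round : ℝ → EReal) : Prop :=
  (∀ x : ℝ, (∀ z ∈ Ffin p emin emax, x < z) → Round x = ⊥) ∧
  (∀ x : ℝ, (∀ z ∈ Ffin p emin emax, z < x) → Round x = ⊤) ∧
  (∀ x : ℝ, (∃ z ∈ Ffin p emin emax, z ≤ x) → (∃ z ∈ Ffin p emin emax, x ≤ z) →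
    ∃ z ∈ Ffin p emin emax ∪ {0}, Round x = (z : EReal) ∧
      ∀ w ∈ Ffin p emin emax ∪ {0}, |x - z| ≤ |x - w|)

/-- The rounding interval `⟦z⟧ = {y : Round y = Round z}` of a finite representable `z`. -/
def fintR (Round : ℝ → EReal) (z : ℝ) : Set ℝ := {y | Round y = Round z}

/-- The rounding interval `⟦z⟧` for `z ∈ {−∞, ∞}`. -/
def fintE (Round : ℝ → EReal) (z : EReal) : Set ℝ := {y | Round y = z}

/-- The relative error `err_rel(x) = (x − Round x)/x`, with the paper's convention that it
takes the value `∞` on `⟦−∞⟧` and `−∞` on `⟦∞⟧`. -/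
def errRel (Round : ℝ → EReal) (x : ℝ) : EReal :=
  if Round x = ⊥ then ⊤
  else if Round x = ⊤ then ⊥
  else (((x - (Round x).toReal) / x : ℝ) : EReal)

end

noncomputable section

/-- `⌈z⌉ = sup ⟦z⟧`. -/
def fceil (Round : ℝ → EReal) (z : ℝ) : ℝ := sSup (fintR Round z)

/-- `⌊z⌋ = inf ⟦z⟧`. -/
def ffloor (Round : ℝ → EReal) (z : ℝ) : ℝ := sInf (fintR Round z)

end
namespace Stmt7

lemma zfp0 (p : ℕ) (e : ℤ) (k : ℕ) : zfp p 0 e k = 2 ^ e * (1 + (k:ℝ)/2^p) := by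
  simp [zfp]

lemma zfp1 (p : ℕ) (e : ℤ) (k : ℕ) : zfp p 1 e k = -zfp p 0 e k := by
  simp [zfp]

lemma zfp0_pos (p : ℕ) (e : ℤ) (k : ℕ) : 0 < zfp p 0 e k := by
  rw [zfp0]; positivity

lemma mem_Ffin0 {p : ℕ} {emin emax : ℤ} {e : ℤ} {k : ℕ}
    (he1 : emin ≤ e) (he2 : e ≤ emax) (hk : k < 2^p) :
    zfp p 0 e k ∈ Ffin p emin emax := ⟨0, by norm_num, e, he1, he2, k, hk, rfl⟩

lemma mem_Ffin1 {p : ℕ} {emin emax : ℤ} {e : ℤ} {k : ℕ}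
    (he1 : emin ≤ e) (he2 : e ≤ emax) (hk : k < 2^p) :
    zfp p 1 e k ∈ Ffin p emin emax := ⟨1, le_refl 1, e, he1, he2, k, hk, rfl⟩

lemma Ffin_neg {p : ℕ} {emin emax : ℤ} {x : ℝ} (hx : x ∈ Ffin p emin emax) :
    -x ∈ Ffin p emin emax := by
  obtain ⟨s, hs, e, he1, he2, k, hk, rfl⟩ := hx
  interval_cases s
  · rw [← zfp1]; exact mem_Ffin1 he1 he2 hk
  · rw [zfp1]; rw [neg_neg]; exact mem_Ffin0 he1 he2 hk

lemma F0_neg {p : ℕ} {emin emax : ℤ} {x : ℝ} (hx : x ∈ Ffin p emin emax ∪ {0}) :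
    -x ∈ Ffin p emin emax ∪ {0} := by
  rcases hx with h | h
  · exact Or.inl (Ffin_neg h)
  · simp only [Set.mem_singleton_iff] at h; subst h; simp

/-- all elements are at most the maximum `M = zfp p 0 emax (2^p - 1)` -/
lemma le_max {p : ℕ} {emin emax : ℤ} {x : ℝ} (hx : x ∈ Ffin p emin emax) :
    x ≤ zfp p 0 emax (2^p - 1) := by
  obtain ⟨s, hs, e, he1, he2, k, hk, rfl⟩ := hx
  have hM : (0:ℝ) < zfp p 0 emax (2^p - 1) := zfp0_pos _ _ _
  interval_cases s
  · rw [zfp0, zfp0]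
    have h1 : (2:ℝ)^e ≤ 2^emax := zpow_le_zpow_right₀ one_le_two he2
    have h2 : ((k:ℝ)) ≤ ((2^p - 1 : ℕ) : ℝ) := by
      exact_mod_cast Nat.le_sub_one_of_lt hk
    have h3 : (0:ℝ) < 2^e := by positivity
    have h4 : (0:ℝ) < 2^p := by positivity
    gcongr
  · rw [zfp1]
    have := zfp0_pos p e k
    linarith

lemma neg_max_le {p : ℕ} {emin emax : ℤ} {x : ℝ} (hx : x ∈ Ffin p emin emax) :
    -zfp p 0 emax (2^p - 1) ≤ x := by
  have := le_max (Ffin_neg hx)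
  linarith

end Stmt7
namespace Stmt7

lemma two_zpow_add_one (e : ℤ) : (2:ℝ)^(e+1) = 2^e * 2 := zpow_add_one₀ two_ne_zero e

lemma gap_above {p : ℕ} {emin emax : ℤ} {e : ℤ} {k : ℕ}
    (he2 : e ≤ emax) (hk : k < 2^p) :
    ∀ w ∈ Ffin p emin emax ∪ {0}, zfp p 0 e k < w →
      zfp p 0 e k + 2^e/2^p ≤ w := by
  intro w hw hlt
  have hz := zfp0_pos p e k
  rcases hw with hw | hw
  swap
  · have hw0 : w = 0 := hw; subst hw0; linarith
  obtain ⟨s, hs, e', he1', he2', k', hk', rfl⟩ := hw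
  interval_cases s
  swap
  · rw [zfp1] at hlt ⊢; have := zfp0_pos p e' k'; linarith
  simp only [zfp0] at hlt ⊢
  have h2e : (0:ℝ) < (2:ℝ)^e := by positivity
  have h2e' : (0:ℝ) < (2:ℝ)^e' := by positivity
  have h2p : (0:ℝ) < (2:ℝ)^p := by positivity
  have hkp : (k:ℝ) < 2^p := by exact_mod_cast hk
  have hk'p : (k':ℝ) < 2^p := by exact_mod_cast hk'
  have hk'0 : (0:ℝ) ≤ (k':ℝ) := Nat.cast_nonneg k'
  have hk0 : (0:ℝ) ≤ (k:ℝ) := Nat.cast_nonneg k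
  have hd' : (0:ℝ) ≤ (k':ℝ)/2^p := by positivity
  rcases lt_trichotomy e' e with h | rfl | h
  · exfalso
    have h3 : (2:ℝ)^e' * 2 ≤ 2^e := by
      rw [← two_zpow_add_one]; exact zpow_le_zpow_right₀ one_le_two (by omega)
    have hX : 1 + (k':ℝ)/2^p ≤ 2 := by
      have : (k':ℝ)/2^p ≤ 1 := by rw [div_le_one h2p]; linarith
      linarith
    have hb : (2:ℝ)^e' * (1 + (k':ℝ)/2^p) ≤ 2^e' * 2 :=
      mul_le_mul_of_nonneg_left hX h2e'.le
    have hc : (2:ℝ)^e ≤ 2^e * (1 + (k:ℝ)/2^p) :=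
      le_mul_of_one_le_right h2e.le (by
        have : (0:ℝ) ≤ (k:ℝ)/2^p := by positivity
        linarith)
    linarith
  · have h6 : 1 + (k:ℝ)/2^p < 1 + (k':ℝ)/2^p := (mul_lt_mul_iff_right₀ h2e).1 hlt
    have hkk : k < k' := by
      by_contra hc
      push_neg at hc
      have h7 : (k':ℝ) ≤ k := by exact_mod_cast hc
      have : (k':ℝ)/2^p ≤ (k:ℝ)/2^p := by gcongr
      linarith
    have hcast : ((k:ℝ) + 1) ≤ k' := by exact_mod_cast hkk
    calc 2^e' * (1 + (k:ℝ)/2^p) + (2:ℝ)^e'/2^p = 2^e' * (1 + ((k:ℝ)+1)/2^p) := by ring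
      _ ≤ 2^e' * (1 + (k':ℝ)/2^p) := by gcongr
  · have hku : (k:ℝ) + 1 ≤ 2^p := by exact_mod_cast hk
    have hX : 1 + ((k:ℝ)+1)/2^p ≤ 2 := by
      have : ((k:ℝ)+1)/2^p ≤ 1 := by rw [div_le_one h2p]; linarith
      linarith
    calc 2^e * (1 + (k:ℝ)/2^p) + (2:ℝ)^e/2^p = 2^e * (1 + ((k:ℝ)+1)/2^p) := by ring
      _ ≤ 2^e * 2 := mul_le_mul_of_nonneg_left hX h2e.le
      _ ≤ 2^e' := by rw [← two_zpow_add_one]; exact zpow_le_zpow_right₀ one_le_two (by omega)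
      _ ≤ 2^e' * (1 + (k':ℝ)/2^p) := le_mul_of_one_le_right h2e'.le
            (by have : (0:ℝ) ≤ (k':ℝ)/2^p := by positivity
                linarith)

/-- the predecessor of `zfp p 0 e k` in `𝔽 ∪ {0}`. -/
noncomputable def predR (p : ℕ) (emin : ℤ) (e : ℤ) (k : ℕ) : ℝ :=
  if k = 0 then (if e = emin then 0 else zfp p 0 (e-1) (2^p - 1)) else zfp p 0 e (k-1)

lemma pred_nonneg (p : ℕ) (emin : ℤ) (e : ℤ) (k : ℕ) : 0 ≤ predR p emin e k := by
  unfold predR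
  split <;> [skip; exact (zfp0_pos _ _ _).le]
  split <;> [exact le_refl 0; exact (zfp0_pos _ _ _).le]

lemma cast_two_pow_sub_one (p : ℕ) : ((2^p - 1 : ℕ) : ℝ) = 2^p - 1 := by
  have : (1:ℕ) ≤ 2^p := Nat.one_le_two_pow
  push_cast [this]; ring

lemma pred_lt (p : ℕ) (emin : ℤ) (e : ℤ) (k : ℕ) (hk : k < 2^p) :
    predR p emin e k < zfp p 0 e k := by
  have h2e : (0:ℝ) < (2:ℝ)^e := by positivity
  have h2p : (0:ℝ) < (2:ℝ)^p := by positivity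
  unfold predR
  split
  · rename_i hk0
    subst hk0
    split
    · exact zfp0_pos _ _ _
    · simp only [zfp0, cast_two_pow_sub_one, Nat.cast_zero]
      have h2 : (2:ℝ)^(e-1) = 2^e / 2 := by
        rw [zpow_sub_one₀ two_ne_zero]; ring
      rw [h2]
      have hX : 1 + ((2:ℝ)^p - 1)/2^p < 2 := by
        have : ((2:ℝ)^p - 1)/2^p < 1 := by rw [div_lt_one h2p]; linarith
        linarith
      calc 2^e / 2 * (1 + ((2:ℝ)^p - 1)/2^p) < 2^e / 2 * 2 := by
            apply mul_lt_mul_of_pos_left hX; positivity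
        _ = 2^e * (1 + 0/2^p) := by ring
  · rename_i hk0
    simp only [zfp0]
    have h1 : ((k - 1 : ℕ) : ℝ) = (k:ℝ) - 1 := by
      have : 1 ≤ k := Nat.one_le_iff_ne_zero.2 hk0
      push_cast [this]; ring
    rw [h1]
    gcongr
    linarith

lemma pred_mem {p : ℕ} {emin emax : ℤ} {e : ℤ} {k : ℕ}
    (he1 : emin ≤ e) (he2 : e ≤ emax) (hk : k < 2^p) :
    predR p emin e k ∈ Ffin p emin emax ∪ {0} := by
  unfold predR
  split
  · split
    · exact Or.inr rfl
    · rename_i h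
      refine Or.inl (mem_Ffin0 (by omega) (by omega) ?_)
      have := Nat.one_le_two_pow (n := p); omega
  · exact Or.inl (mem_Ffin0 he1 he2 (by omega))

lemma gap_below {p : ℕ} {emin emax : ℤ} {e : ℤ} {k : ℕ}
    (he1 : emin ≤ e) (hk : k < 2^p) :
    ∀ w ∈ Ffin p emin emax ∪ {0}, w < zfp p 0 e k → w ≤ predR p emin e k := by
  intro w hw hlt
  have hpn := pred_nonneg p emin e k
  rcases hw with hw | hw
  swap
  · have hw0 : w = 0 := hw; subst hw0; exact hpn
  obtain ⟨s, hs, e', he1', he2', k', hk', rfl⟩ := hw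
  interval_cases s
  swap
  · rw [zfp1]; have := zfp0_pos p e' k'; linarith
  have h2e : (0:ℝ) < (2:ℝ)^e := by positivity
  have h2e' : (0:ℝ) < (2:ℝ)^e' := by positivity
  have h2p : (0:ℝ) < (2:ℝ)^p := by positivity
  have hkp : (k:ℝ) < 2^p := by exact_mod_cast hk
  have hk'p : (k':ℝ) < 2^p := by exact_mod_cast hk'
  have hk'0 : (0:ℝ) ≤ (k':ℝ) := Nat.cast_nonneg k'
  have hk0 : (0:ℝ) ≤ (k:ℝ) := Nat.cast_nonneg k
  simp only [zfp0] at hlt ⊢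
  unfold predR
  split
  · rename_i hkz
    subst hkz
    norm_num at hlt
    have hee' : e' < e := by
      by_contra hc
      push_neg at hc
      have h3 : (2:ℝ)^e ≤ 2^e' := zpow_le_zpow_right₀ one_le_two hc
      have : (2:ℝ)^e' ≤ 2^e' * (1 + (k':ℝ)/2^p) :=
        le_mul_of_one_le_right h2e'.le (by
          have : (0:ℝ) ≤ (k':ℝ)/2^p := by positivity
          linarith)
      linarith
    split
    · rename_i hemin
      exfalso
      omega
    · simp only [zfp0, cast_two_pow_sub_one]
      have h3 : (2:ℝ)^e' ≤ 2^(e-1) := zpow_le_zpow_right₀ one_le_two (by omega)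
      have h4 : (k':ℝ) ≤ 2^p - 1 := by
        have h5 : k' + 1 ≤ 2^p := hk'
        have h6 : ((k' + 1 : ℕ):ℝ) ≤ ((2^p : ℕ):ℝ) := by exact_mod_cast h5
        push_cast at h6
        linarith
      gcongr
  · rename_i hkz
    simp only [zfp0]
    have h1 : ((k - 1 : ℕ) : ℝ) = (k:ℝ) - 1 := by
      have : 1 ≤ k := Nat.one_le_iff_ne_zero.2 hkz
      push_cast [this]; ring
    rw [h1]
    have hk1 : (1:ℝ) ≤ (k:ℝ) := by
      have : 1 ≤ k := Nat.one_le_iff_ne_zero.2 hkz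
      exact_mod_cast this
    rcases lt_trichotomy e' e with h | rfl | h
    · have h3 : (2:ℝ)^e' * 2 ≤ 2^e := by
        rw [← two_zpow_add_one]; exact zpow_le_zpow_right₀ one_le_two (by omega)
      have hX : 1 + (k':ℝ)/2^p ≤ 2 := by
        have : (k':ℝ)/2^p ≤ 1 := by rw [div_le_one h2p]; linarith
        linarith
      calc (2:ℝ)^e' * (1 + (k':ℝ)/2^p) ≤ 2^e' * 2 := mul_le_mul_of_nonneg_left hX h2e'.le
        _ ≤ 2^e := h3
        _ ≤ 2^e * (1 + ((k:ℝ)-1)/2^p) :=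
            le_mul_of_one_le_right h2e.le (by
              have : (0:ℝ) ≤ ((k:ℝ)-1)/2^p := div_nonneg (by linarith) h2p.le
              linarith)
    · have h6 : 1 + (k':ℝ)/2^p < 1 + (k:ℝ)/2^p := (mul_lt_mul_iff_right₀ h2e').1 hlt
      have hkk : k' < k := by
        by_contra hc
        push_neg at hc
        have h7 : (k:ℝ) ≤ k' := by exact_mod_cast hc
        have : (k:ℝ)/2^p ≤ (k':ℝ)/2^p := by gcongr
        linarith
      have hcast : (k':ℝ) ≤ (k:ℝ) - 1 := by
        have h7 : k' + 1 ≤ k := hkk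
        have h8 : ((k' + 1 : ℕ):ℝ) ≤ (k:ℝ) := by exact_mod_cast h7
        push_cast at h8
        linarith
      gcongr
    · exfalso
      have h3 : (2:ℝ)^e * 2 ≤ 2^e' := by
        rw [← two_zpow_add_one]; exact zpow_le_zpow_right₀ one_le_two (by omega)
      have hX : 1 + (k:ℝ)/2^p ≤ 2 := by
        have : (k:ℝ)/2^p ≤ 1 := by rw [div_le_one h2p]; linarith
        linarith
      have hb : (2:ℝ)^e * (1 + (k:ℝ)/2^p) ≤ 2^e * 2 :=
        mul_le_mul_of_nonneg_left hX h2e.le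
      have hc : (2:ℝ)^e' ≤ 2^e' * (1 + (k':ℝ)/2^p) :=
        le_mul_of_one_le_right h2e'.le (by
          have : (0:ℝ) ≤ (k':ℝ)/2^p := by positivity
          linarith)
      linarith

end Stmt7
namespace Stmt7

lemma succ_mem {p : ℕ} {emin emax : ℤ} {e : ℤ} {k : ℕ}
    (he1 : emin ≤ e) (he2 : e ≤ emax) (hk : k < 2^p)
    (hne : ¬(e = emax ∧ k = 2^p - 1)) :
    zfp p 0 e k + 2^e/2^p ∈ Ffin p emin emax := by
  have h2p : (0:ℝ) < (2:ℝ)^p := by positivity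
  by_cases hkp : k + 1 < 2^p
  · have hv : zfp p 0 e (k+1) = zfp p 0 e k + 2^e/2^p := by
      simp only [zfp0]; push_cast; ring
    rw [← hv]; exact mem_Ffin0 he1 he2 hkp
  · have hk2 : k = 2^p - 1 := by omega
    have hee : e < emax := by
      rcases eq_or_lt_of_le he2 with h | h
      · exact absurd ⟨h, hk2⟩ hne
      · exact h
    have hv : zfp p 0 (e+1) 0 = zfp p 0 e k + 2^e/2^p := by
      simp only [zfp0]
      subst hk2
      rw [cast_two_pow_sub_one, two_zpow_add_one]
      push_cast
      field_simp
      ring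
    rw [← hv]
    exact mem_Ffin0 (by omega) (by omega) (by positivity)

lemma round_self {p : ℕ} {emin emax : ℤ} {Round : ℝ → EReal}
    (hR : IsRoundNearest p emin emax Round) {z : ℝ} (hz : z ∈ Ffin p emin emax) :
    Round z = (z : EReal) := by
  obtain ⟨-, -, h3⟩ := hR
  obtain ⟨w, hw, hrw, hmin⟩ := h3 z ⟨z, hz, le_refl z⟩ ⟨z, hz, le_refl z⟩
  have h0 := hmin z (Or.inl hz)
  simp only [sub_self, abs_zero] at h0
  have h1 : |z - w| = 0 := le_antisymm h0 (abs_nonneg _)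
  have h2 : z = w := by have := abs_eq_zero.1 h1; linarith
  rw [hrw, ← h2]

lemma max_mem {p : ℕ} {emin emax : ℤ} (hee : emin < emax) :
    zfp p 0 emax (2^p - 1) ∈ Ffin p emin emax :=
  mem_Ffin0 hee.le le_rfl (by have := Nat.one_le_two_pow (n := p); omega)

lemma round_bot {p : ℕ} {emin emax : ℤ} {Round : ℝ → EReal}
    (hR : IsRoundNearest p emin emax Round) {y : ℝ}
    (hy : y < -zfp p 0 emax (2^p - 1)) : Round y = ⊥ :=
  hR.1 y fun x hx => lt_of_lt_of_le hy (neg_max_le hx)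

lemma round_top {p : ℕ} {emin emax : ℤ} {Round : ℝ → EReal}
    (hR : IsRoundNearest p emin emax Round) {y : ℝ}
    (hy : zfp p 0 emax (2^p - 1) < y) : Round y = ⊤ :=
  hR.2.1 y fun x hx => lt_of_le_of_lt (le_max hx) hy

lemma round_eq {p : ℕ} {emin emax : ℤ} {Round : ℝ → EReal}
    (hR : IsRoundNearest p emin emax Round) (hee : emin < emax) {y z : ℝ}
    (hz : z ∈ Ffin p emin emax ∪ {0})
    (hm : -zfp p 0 emax (2^p - 1) ≤ y) (hM : y ≤ zfp p 0 emax (2^p - 1))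
    (hnear : ∀ w ∈ Ffin p emin emax ∪ {0}, w ≠ z → |y - z| < |y - w|) :
    Round y = (z : EReal) := by
  have hMF := max_mem (p := p) hee
  have hmF := Ffin_neg hMF
  obtain ⟨-, -, h3⟩ := hR
  obtain ⟨w, hw, hrw, hmin⟩ := h3 y ⟨_, hmF, hm⟩ ⟨_, hMF, hM⟩
  by_cases hwz : w = z
  · rw [hrw, hwz]
  · exact absurd (hmin z hz) (not_le.2 (hnear w hw hwz))

lemma round_ne {p : ℕ} {emin emax : ℤ} {Round : ℝ → EReal}
    (hR : IsRoundNearest p emin emax Round) (hee : emin < emax) {y z w : ℝ}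
    (hw : w ∈ Ffin p emin emax ∪ {0})
    (hm : -zfp p 0 emax (2^p - 1) ≤ y) (hM : y ≤ zfp p 0 emax (2^p - 1))
    (hclose : |y - w| < |y - z|) :
    Round y ≠ (z : EReal) := by
  have hMF := max_mem (p := p) hee
  have hmF := Ffin_neg hMF
  obtain ⟨-, -, h3⟩ := hR
  obtain ⟨w', hw', hrw', hmin⟩ := h3 y ⟨_, hmF, hm⟩ ⟨_, hMF, hM⟩
  have h4 : |y - w'| < |y - z| := lt_of_le_of_lt (hmin w hw) hclose
  intro hcon
  rw [hrw'] at hcon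
  have : w' = z := EReal.coe_eq_coe_iff.mp hcon
  rw [this] at h4
  exact lt_irrefl _ h4

end Stmt7
namespace Stmt7

noncomputable def LO (p : ℕ) (emin : ℤ) (e : ℤ) (k : ℕ) : ℝ :=
  (predR p emin e k + zfp p 0 e k)/2

noncomputable def HI (p : ℕ) (emax : ℤ) (e : ℤ) (k : ℕ) : ℝ :=
  if e = emax ∧ k = 2^p - 1 then zfp p 0 e k else zfp p 0 e k + (2^e/2^p)/2

lemma LO_lt (p : ℕ) (emin : ℤ) (e : ℤ) (k : ℕ) (hk : k < 2^p) :
    LO p emin e k < zfp p 0 e k := by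
  have := pred_lt p emin e k hk; unfold LO; linarith

lemma LO_pos (p : ℕ) (emin : ℤ) (e : ℤ) (k : ℕ) :
    0 < LO p emin e k := by
  have h1 := pred_nonneg p emin e k
  have h2 := zfp0_pos p e k
  unfold LO; linarith

lemma le_HI (p : ℕ) (emax : ℤ) (e : ℤ) (k : ℕ) :
    zfp p 0 e k ≤ HI p emax e k := by
  have hD : (0:ℝ) < 2^e/2^p := by positivity
  unfold HI; split
  · exact le_rfl
  · linarith

lemma HI_le (p : ℕ) (emax : ℤ) (e : ℤ) (k : ℕ) :
    HI p emax e k ≤ zfp p 0 e k + (2^e/2^p)/2 := by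
  have hD : (0:ℝ) < 2^e/2^p := by positivity
  unfold HI; split
  · linarith
  · exact le_rfl

lemma HI_le_max {p : ℕ} {emin emax : ℤ} {e : ℤ} {k : ℕ}
    (he1 : emin ≤ e) (he2 : e ≤ emax) (hk : k < 2^p) :
    HI p emax e k ≤ zfp p 0 emax (2^p - 1) := by
  unfold HI; split
  · rename_i h
    rw [h.1, h.2]
  · rename_i h
    have hsucc := le_max (succ_mem he1 he2 hk h)
    have hD : (0:ℝ) < 2^e/2^p := by positivity
    linarith

lemma LO_le_max {p : ℕ} {emin emax : ℤ} {e : ℤ} {k : ℕ}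
    (he1 : emin ≤ e) (he2 : e ≤ emax) (hk : k < 2^p) :
    LO p emin e k ≤ zfp p 0 emax (2^p - 1) :=
  le_trans (LO_lt p emin e k hk).le (le_max (mem_Ffin0 he1 he2 hk))

lemma pos_incl {p : ℕ} {emin emax : ℤ} {Round : ℝ → EReal}
    (hR : IsRoundNearest p emin emax Round) (hee : emin < emax)
    {e : ℤ} {k : ℕ} (he1 : emin ≤ e) (he2 : e ≤ emax) (hk : k < 2^p) :
    Set.Ioo (LO p emin e k) (HI p emax e k) ⊆ fintR Round (zfp p 0 e k) := by
  intro y hy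
  obtain ⟨hy1, hy2⟩ := hy
  have hzpos := zfp0_pos p e k
  have hplt := pred_lt p emin e k hk
  have hpnn := pred_nonneg p emin e k
  have hD : (0:ℝ) < 2^e/2^p := by positivity
  have hzM : zfp p 0 e k ≤ zfp p 0 emax (2^p-1) := le_max (mem_Ffin0 he1 he2 hk)
  have hMpos := zfp0_pos p emax (2^p - 1)
  have hLO : LO p emin e k = (predR p emin e k + zfp p 0 e k)/2 := rfl
  have hHI := HI_le p emax e k
  have hHIM := HI_le_max (emin := emin) he1 he2 hk
  show Round y = Round (zfp p 0 e k)
  rw [round_self hR (mem_Ffin0 he1 he2 hk)]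
  refine round_eq hR hee (Or.inl (mem_Ffin0 he1 he2 hk)) (by linarith [LO_pos p emin e k]) (by linarith) ?_
  intro w hw hwz
  rcases lt_or_gt_of_ne hwz with hlt | hgt
  · have hwp := gap_below he1 hk w hw hlt
    rw [hLO] at hy1
    calc |y - zfp p 0 e k| < y - w := abs_lt.2 ⟨by linarith, by linarith⟩
      _ ≤ |y - w| := le_abs_self _
  · have hwp := gap_above he2 hk w hw hgt
    calc |y - zfp p 0 e k| < w - y := abs_lt.2 ⟨by linarith, by linarith⟩
      _ ≤ |y - w| := by rw [abs_sub_comm]; exact le_abs_self _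

lemma pos_excl {p : ℕ} {emin emax : ℤ} {Round : ℝ → EReal}
    (hR : IsRoundNearest p emin emax Round) (hee : emin < emax)
    {e : ℤ} {k : ℕ} (he1 : emin ≤ e) (he2 : e ≤ emax) (hk : k < 2^p) :
    fintR Round (zfp p 0 e k) ⊆ Set.Icc (LO p emin e k) (HI p emax e k) := by
  intro y hy
  have hyz : Round y = ((zfp p 0 e k : ℝ) : EReal) :=
    (hy : Round y = _).trans (round_self hR (mem_Ffin0 he1 he2 hk))
  have hzpos := zfp0_pos p e k
  have hplt := pred_lt p emin e k hk
  have hpnn := pred_nonneg p emin e k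
  have hD : (0:ℝ) < 2^e/2^p := by positivity
  have hzM : zfp p 0 e k ≤ zfp p 0 emax (2^p-1) := le_max (mem_Ffin0 he1 he2 hk)
  have hMpos := zfp0_pos p emax (2^p - 1)
  have hLO : LO p emin e k = (predR p emin e k + zfp p 0 e k)/2 := rfl
  constructor
  · by_contra hcon
    push_neg at hcon
    rw [hLO] at hcon
    rcases lt_or_ge y (-(zfp p 0 emax (2^p-1))) with h | h
    · rw [round_bot hR h] at hyz
      exact (EReal.coe_ne_bot _) hyz.symm
    · refine round_ne hR hee (pred_mem he1 he2 hk) h (by linarith) ?_ hyz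
      have habs : |y - zfp p 0 e k| = zfp p 0 e k - y := by
        rw [abs_of_nonpos (by linarith)]; ring
      rw [habs]
      exact abs_lt.2 ⟨by linarith, by linarith⟩
  · by_contra hcon
    push_neg at hcon
    by_cases hmax : e = emax ∧ k = 2^p - 1
    · have hHIz : HI p emax e k = zfp p 0 e k := by unfold HI; rw [if_pos hmax]
      rw [hHIz] at hcon
      rw [hmax.1, hmax.2] at hcon
      rw [round_top hR hcon] at hyz
      exact (EReal.coe_ne_top _) hyz.symm
    · have hHIz : HI p emax e k = zfp p 0 e k + (2^e/2^p)/2 := by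
        unfold HI; rw [if_neg hmax]
      rw [hHIz] at hcon
      rcases le_or_gt y (zfp p 0 emax (2^p-1)) with h | h
      · refine round_ne hR hee (Or.inl (succ_mem he1 he2 hk hmax)) (by linarith) h ?_ hyz
        have habs : |y - zfp p 0 e k| = y - zfp p 0 e k := abs_of_nonneg (by linarith)
        rw [habs]
        exact abs_lt.2 ⟨by linarith, by linarith⟩
      · rw [round_top hR h] at hyz
        exact (EReal.coe_ne_top _) hyz.symm

end Stmt7
namespace Stmt7

lemma neg_incl {p : ℕ} {emin emax : ℤ} {Round : ℝ → EReal}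
    (hR : IsRoundNearest p emin emax Round) (hee : emin < emax)
    {e : ℤ} {k : ℕ} (he1 : emin ≤ e) (he2 : e ≤ emax) (hk : k < 2^p) :
    Set.Ioo (-(HI p emax e k)) (-(LO p emin e k)) ⊆ fintR Round (zfp p 1 e k) := by
  intro y hy
  obtain ⟨hy1, hy2⟩ := hy
  have hzpos := zfp0_pos p e k
  have hplt := pred_lt p emin e k hk
  have hpnn := pred_nonneg p emin e k
  have hD : (0:ℝ) < 2^e/2^p := by positivity
  have hzM : zfp p 0 e k ≤ zfp p 0 emax (2^p-1) := le_max (mem_Ffin0 he1 he2 hk)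
  have hMpos := zfp0_pos p emax (2^p - 1)
  have hLO : LO p emin e k = (predR p emin e k + zfp p 0 e k)/2 := rfl
  have hHI := HI_le p emax e k
  have hzHI := le_HI p emax e k
  have hHIM := HI_le_max (emin := emin) he1 he2 hk
  have hLOpos := LO_pos p emin e k
  show Round y = Round (zfp p 1 e k)
  rw [round_self hR (mem_Ffin1 he1 he2 hk), zfp1]
  refine round_eq hR hee (Or.inl (by rw [← zfp1]; exact mem_Ffin1 he1 he2 hk))
    (by linarith) (by linarith) ?_
  intro w hw hwz
  have hw' := F0_neg hw
  have hw'z : -w ≠ zfp p 0 e k := fun h => hwz (by linarith)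
  rcases lt_or_gt_of_ne hw'z with hlt | hgt
  · have hwp := gap_below he1 hk _ hw' hlt
    rw [hLO] at hy2
    have h1 : |y - -zfp p 0 e k| = |y + zfp p 0 e k| := by rw [sub_neg_eq_add]
    rw [h1]
    calc |y + zfp p 0 e k| < w - y := abs_lt.2 ⟨by linarith, by linarith⟩
      _ ≤ |y - w| := by rw [abs_sub_comm]; exact le_abs_self _
  · have hwp := gap_above he2 hk _ hw' hgt
    have h1 : |y - -zfp p 0 e k| = |y + zfp p 0 e k| := by rw [sub_neg_eq_add]
    rw [h1]
    calc |y + zfp p 0 e k| < y - w := abs_lt.2 ⟨by linarith, by linarith⟩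
      _ ≤ |y - w| := le_abs_self _

lemma neg_excl {p : ℕ} {emin emax : ℤ} {Round : ℝ → EReal}
    (hR : IsRoundNearest p emin emax Round) (hee : emin < emax)
    {e : ℤ} {k : ℕ} (he1 : emin ≤ e) (he2 : e ≤ emax) (hk : k < 2^p) :
    fintR Round (zfp p 1 e k) ⊆ Set.Icc (-(HI p emax e k)) (-(LO p emin e k)) := by
  intro y hy
  have hyz : Round y = ((-zfp p 0 e k : ℝ) : EReal) := by
    have := (hy : Round y = _).trans (round_self hR (mem_Ffin1 he1 he2 hk))
    rw [zfp1] at this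
    exact this
  have hzpos := zfp0_pos p e k
  have hplt := pred_lt p emin e k hk
  have hpnn := pred_nonneg p emin e k
  have hD : (0:ℝ) < 2^e/2^p := by positivity
  have hzM : zfp p 0 e k ≤ zfp p 0 emax (2^p-1) := le_max (mem_Ffin0 he1 he2 hk)
  have hMpos := zfp0_pos p emax (2^p - 1)
  have hLO : LO p emin e k = (predR p emin e k + zfp p 0 e k)/2 := rfl
  have hzHI := le_HI p emax e k
  constructor
  · by_contra hcon
    push_neg at hcon
    by_cases hmax : e = emax ∧ k = 2^p - 1
    · have hHIz : HI p emax e k = zfp p 0 e k := by unfold HI; rw [if_pos hmax]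
      rw [hHIz, hmax.1, hmax.2] at hcon
      rw [round_bot hR hcon] at hyz
      exact (EReal.coe_ne_bot _) hyz.symm
    · have hHIz : HI p emax e k = zfp p 0 e k + (2^e/2^p)/2 := by
        unfold HI; rw [if_neg hmax]
      rw [hHIz] at hcon
      rcases lt_or_ge y (-(zfp p 0 emax (2^p-1))) with h | h
      · rw [round_bot hR h] at hyz
        exact (EReal.coe_ne_bot _) hyz.symm
      · refine round_ne hR hee (Or.inl (Ffin_neg (succ_mem he1 he2 hk hmax))) h
          (by linarith) ?_ hyz
        have e1 : y - -(zfp p 0 e k + 2^e/2^p) = y + zfp p 0 e k + 2^e/2^p := by ring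
        have e2 : y - -zfp p 0 e k = y + zfp p 0 e k := by ring
        rw [e1, e2]
        have habs : |y + zfp p 0 e k| = -(y + zfp p 0 e k) := abs_of_neg (by linarith)
        rw [habs]
        exact abs_lt.2 ⟨by linarith, by linarith⟩
  · by_contra hcon
    push_neg at hcon
    rcases le_or_gt y (zfp p 0 emax (2^p-1)) with h | h
    · refine round_ne hR hee (F0_neg (pred_mem he1 he2 hk))
        (by rw [hLO] at hcon; linarith) h ?_ hyz
      rw [hLO] at hcon
      have e1 : y - -(predR p emin e k) = y + predR p emin e k := by ring
      have e2 : y - -zfp p 0 e k = y + zfp p 0 e k := by ring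
      rw [e1, e2]
      have habs : |y + zfp p 0 e k| = y + zfp p 0 e k := abs_of_pos (by linarith)
      rw [habs]
      exact abs_lt.2 ⟨by linarith, by linarith⟩
    · rw [round_top hR h] at hyz
      exact (EReal.coe_ne_top _) hyz.symm

lemma sandwich {S : Set ℝ} {a b : ℝ} (hab : a < b)
    (h1 : Set.Ioo a b ⊆ S) (h2 : S ⊆ Set.Icc a b) : sInf S = a ∧ sSup S = b := by
  have hne : S.Nonempty := ⟨(a+b)/2, h1 ⟨by linarith, by linarith⟩⟩
  have hbb : BddBelow S := ⟨a, fun x hx => (h2 hx).1⟩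
  have hba : BddAbove S := ⟨b, fun x hx => (h2 hx).2⟩
  constructor
  · refine le_antisymm ?_ (le_csInf hne fun x hx => (h2 hx).1)
    calc sInf S ≤ sInf (Set.Ioo a b) := csInf_le_csInf hbb (Set.nonempty_Ioo.2 hab) h1
      _ = a := csInf_Ioo hab
  · refine le_antisymm (csSup_le hne fun x hx => (h2 hx).2) ?_
    calc b = sSup (Set.Ioo a b) := (csSup_Ioo hab).symm
      _ ≤ sSup S := csSup_le_csSup hba (Set.nonempty_Ioo.2 hab) h1

end Stmt7
/-- Explicit formulas for the endpoints `⌊z⌋ = inf ⟦z⟧` and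
`⌈z⌉ = sup ⟦z⟧` of the rounding interval of a positive representable `z = z(0,e,k)`,
together with `⌊z(1,e,k)⌋ = −⌈z(0,e,k)⌉` and `⌈z(1,e,k)⌉ = −⌊z(0,e,k)⌋`. -/
theorem stmt7
    (p : ℕ) (hp : 1 ≤ p) (emin emax : ℤ) (hee : emin < emax)
    (Round : ℝ → EReal) (hRound : IsRoundNearest p emin emax Round)
    (e : ℤ) (he1 : emin ≤ e) (he2 : e ≤ emax) (k : ℕ) (hk : k < 2 ^ p) :
    ((e = emin ∧ k = 0) → ffloor Round (zfp p 0 e k) = 2 ^ (e - 1)) ∧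
    ((emin < e ∧ k = 0) → ffloor Round (zfp p 0 e k) =
        2 ^ (e - 1) * (1 + ((2 : ℝ) ^ (p + 1) - 1) / 2 ^ (p + 1))) ∧
    (k ≠ 0 → ffloor Round (zfp p 0 e k) =
        2 ^ e * (1 + (2 * (k : ℝ) - 1) / 2 ^ (p + 1))) ∧
    ((e = emax ∧ k = 2 ^ p - 1) → fceil Round (zfp p 0 e k) = zfp p 0 e k) ∧
    (¬(e = emax ∧ k = 2 ^ p - 1) → fceil Round (zfp p 0 e k) =
        2 ^ e * (1 + (2 * (k : ℝ) + 1) / 2 ^ (p + 1))) ∧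
    ffloor Round (zfp p 1 e k) = -fceil Round (zfp p 0 e k) ∧
    fceil Round (zfp p 1 e k) = -ffloor Round (zfp p 0 e k) := by
  have hab : Stmt7.LO p emin e k < Stmt7.HI p emax e k :=
    lt_of_lt_of_le (Stmt7.LO_lt p emin e k hk) (Stmt7.le_HI p emax e k)
  have hpos := Stmt7.sandwich hab (Stmt7.pos_incl hRound hee he1 he2 hk)
    (Stmt7.pos_excl hRound hee he1 he2 hk)
  have hneg := Stmt7.sandwich (by linarith : -(Stmt7.HI p emax e k) < -(Stmt7.LO p emin e k))
    (Stmt7.neg_incl hRound hee he1 he2 hk) (Stmt7.neg_excl hRound hee he1 he2 hk)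
  have hfl : ffloor Round (zfp p 0 e k) = Stmt7.LO p emin e k := hpos.1
  have hce : fceil Round (zfp p 0 e k) = Stmt7.HI p emax e k := hpos.2
  have hfln : ffloor Round (zfp p 1 e k) = -(Stmt7.HI p emax e k) := hneg.1
  have hcen : fceil Round (zfp p 1 e k) = -(Stmt7.LO p emin e k) := hneg.2
  have hp2 : ((2:ℝ)^p) ≠ 0 := by positivity
  refine ⟨?_, ?_, ?_, ?_, ?_, ?_, ?_⟩
  · rintro ⟨rfl, rfl⟩
    rw [hfl]
    unfold Stmt7.LO Stmt7.predR
    rw [if_pos rfl, if_pos rfl, Stmt7.zfp0]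
    rw [zpow_sub_one₀ (two_ne_zero)]
    norm_num
    ring
  · rintro ⟨hlt, rfl⟩
    rw [hfl]
    unfold Stmt7.LO Stmt7.predR
    rw [if_pos rfl, if_neg (by omega : ¬ e = emin), Stmt7.zfp0, Stmt7.zfp0,
      Stmt7.cast_two_pow_sub_one]
    have h2 : (2:ℝ)^e = 2^(e-1)*2 := by
      rw [← Stmt7.two_zpow_add_one]
      norm_num
    rw [h2, pow_succ]
    field_simp
    ring
  · intro hk0
    rw [hfl]
    unfold Stmt7.LO Stmt7.predR
    rw [if_neg hk0, Stmt7.zfp0, Stmt7.zfp0]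
    have h1 : ((k - 1 : ℕ) : ℝ) = (k:ℝ) - 1 := by
      have : 1 ≤ k := Nat.one_le_iff_ne_zero.2 hk0
      push_cast [this]; ring
    rw [h1, pow_succ]
    field_simp
    ring
  · intro h
    rw [hce]
    unfold Stmt7.HI
    rw [if_pos h]
  · intro h
    rw [hce]
    unfold Stmt7.HI
    rw [if_neg h, Stmt7.zfp0, pow_succ]
    field_simp
    ring
  · rw [hfln, hce]
  · rw [hcen, hfl]
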